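/- arXiv:1912.08783 — 3 statements merged into one kernel-verified Lean document; each statement's English description precedes it below -/
import Mathlib

section
/- Let H be a finite-dimensional Hopf algebra and Λ ∈ H a left integral (i.e. hΛ = ε(h)Λ for all h ∈ H). Then every element of the form ad Λ (h) = Σ Λ₁ h S(Λ₂) is central in H; moreover the subspace ad Λ (H) is an ideal of the center Z(H). -/
/-!
The identities `ad (a b) = ad a ∘ ad b` and `Σ ad g₁ (y) · g₂ = g y` give
`g · ad h x = Σ ad (g₁ h) x · g₂` for every `h`. For a left integral `g₁ Λ = ε(g₁) Λ`, so the
right-hand side collapses to `ad Λ x · g`. A central `z` passes through the Sweedler sum: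
`z · ad h x = ad h (z x)`.
-/

open TensorProduct

/-- The left Hopf-adjoint action `ad h a = Σ h₁ a S(h₂)`. -/
noncomputable def ad {k H : Type*} [Field k] [Ring H] [HopfAlgebra k H] (h a : H) : H :=
  TensorProduct.lift ((LinearMap.mul k H).compl₂
      ((LinearMap.mulLeft k a).comp (HopfAlgebra.antipode (R := k))))
    (Coalgebra.comul (R := k) h)

namespace Coalgebra

theorem sum_counit_right_smul {R A ι : Type*} [CommSemiring R] [AddCommMonoid A] [Module R A]
    [Coalgebra R A] {a : A} (r : Repr R a ι) :
    ∑ i ∈ r.index, counit (R := R) (r.right i) • r.left i = a := by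
  simpa only [map_sum, _root_.TensorProduct.rid_tmul, one_smul]
    using congrArg (_root_.TensorProduct.rid R A) (sum_tmul_counit_eq r)

end Coalgebra

namespace HopfAlgebra

open Coalgebra

variable {k H ι : Type*} [Field k] [Ring H] [HopfAlgebra k H]

theorem ad_eq_sum {h : H} (r : Repr k h ι) (x : H) :
    ad (k := k) h x = ∑ i ∈ r.index, r.left i * x * antipode k (r.right i) := by
  simp [ad, ← r.eq, mul_assoc]

theorem ad_smul (c : k) (h x : H) : ad (k := k) (c • h) x = c • ad (k := k) h x := by
  simp only [ad, map_smul]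

theorem ad_mul (a b x : H) : ad (k := k) (a * b) x = ad (k := k) a (ad (k := k) b x) := by
  let ra := ℛ k a
  let rb := ℛ k b
  simp only [ad_eq_sum (ra.mul rb), ad_eq_sum ra, ad_eq_sum rb, Repr.mul_index, Repr.mul_left,
    Repr.mul_right, Finset.sum_product, antipode_mul_antidistrib, Finset.mul_sum, Finset.sum_mul,
    mul_assoc]

theorem sum_ad_mul {g : H} (r : Repr k g ι) (y : H) :
    ∑ i ∈ r.index, ad (k := k) (r.left i) y * r.right i = g * y := by
  let r₁ i := ℛ k (r.left i)
  let r₂ i := ℛ k (r.right i)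
  let φ : H ⊗[k] (H ⊗[k] H) →ₗ[k] H := LinearMap.mul' k H ∘ₗ
    TensorProduct.map (LinearMap.mulRight k y) (LinearMap.mul' k H ∘ₗ (antipode k).rTensor H)
  -- coassociativity, read through `u ⊗ v ⊗ w ↦ u y S(v) w`
  have coassoc := congrArg φ (sum_tmul_tmul_eq r r₁ r₂)
  simp only [φ, map_sum, LinearMap.comp_apply, TensorProduct.map_tmul, LinearMap.rTensor_tmul,
    LinearMap.mul'_apply, LinearMap.mulRight_apply] at coassoc
  calc ∑ i ∈ r.index, ad (k := k) (r.left i) y * r.right i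
      = ∑ i ∈ r.index, ∑ j ∈ (r₂ i).index,
          r.left i * y * (antipode k ((r₂ i).left j) * (r₂ i).right j) := by
        rw [← coassoc]
        simp only [ad_eq_sum (r₁ _), Finset.sum_mul, mul_assoc]
    _ = ∑ i ∈ r.index, counit (R := k) (r.right i) • (r.left i * y) := by
        simp only [← Finset.mul_sum, sum_antipode_mul_eq_smul, mul_smul_comm, mul_one]
    _ = g * y := by
        simp only [← smul_mul_assoc, ← Finset.sum_mul, sum_counit_right_smul]

theorem mul_ad_eq_sum {g : H} (r : Repr k g ι) (h x : H) :
    g * ad (k := k) h x = ∑ i ∈ r.index, ad (k := k) (r.left i * h) x * r.right i := by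
  simp only [ad_mul, sum_ad_mul]

theorem mul_ad_of_forall_commute {z : H} (hz : ∀ g : H, g * z = z * g) (h x : H) :
    z * ad (k := k) h x = ad (k := k) h (z * x) := by
  let r := ℛ k h
  simp only [ad_eq_sum r, Finset.mul_sum, ← mul_assoc, hz]

end HopfAlgebra

theorem stmt_3_general {k H : Type*} [Field k] [Ring H] [HopfAlgebra k H]
    (Λ : H) (hΛ : ∀ h : H, h * Λ = Coalgebra.counit (R := k) h • Λ) :
    (∀ (x g : H), g * ad (k := k) Λ x = ad (k := k) Λ x * g) ∧
    (∀ (z x : H), (∀ g : H, g * z = z * g) →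
      ∃ y : H, z * ad (k := k) Λ x = ad (k := k) Λ y) := by
  refine ⟨fun x g => ?_, fun z x hz => ⟨z * x, HopfAlgebra.mul_ad_of_forall_commute hz Λ x⟩⟩
  let r := Coalgebra.Repr.arbitrary k g
  calc g * ad (k := k) Λ x
      = ∑ i ∈ r.index, ad (k := k) (r.left i * Λ) x * r.right i :=
        HopfAlgebra.mul_ad_eq_sum r Λ x
    _ = ad (k := k) Λ x * ∑ i ∈ r.index, Coalgebra.counit (R := k) (r.left i) • r.right i := by
        simp only [hΛ, HopfAlgebra.ad_smul, smul_mul_assoc, Finset.mul_sum, mul_smul_comm]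
    _ = ad (k := k) Λ x * g := by rw [Coalgebra.sum_counit_smul]

/-- if `H` is a finite-dimensional Hopf algebra and `Λ` a left integral
(`h Λ = ε(h) Λ` for all `h`), then every `ad Λ h = Σ Λ₁ h S(Λ₂)` is central in `H`,
and the subspace `ad Λ (H)` (the Higman ideal) is an ideal of the center: the product
of a central element with an element of `ad Λ (H)` again lies in `ad Λ (H)`. -/
theorem stmt_3 {k H : Type*} [Field k] [Ring H] [HopfAlgebra k H]
    [FiniteDimensional k H]
    (Λ : H) (hΛ : ∀ h : H, h * Λ = Coalgebra.counit (R := k) h • Λ) :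
    (∀ (x g : H), g * ad (k := k) Λ x = ad (k := k) Λ x * g) ∧
    (∀ (z x : H), (∀ g : H, g * z = z * g) →
      ∃ y : H, z * ad (k := k) Λ x = ad (k := k) Λ y) :=
  stmt_3_general Λ hΛ
end

section
/- The number of orbits of the extended affine Weyl group W ⋉ lP on the weight lattice P of sl_n, for l coprime to n and l ≥ n+1, equals the rational Catalan number (1/(l+n))·C(l+n, n) = (l+1)(l+2)···(l+n−1)/n!. -/
/-- The orbit relation of the extended affine Weyl group `W ⋉ lP` of `sl_n` on the weight
lattice `P = ℤⁿ/ℤ(1,…,1)`, expressed on representatives in `ℤⁿ = Fin n → ℤ`: `x ~ y` iff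
`y` is obtained from `x` by permuting coordinates, translating by `l` times a lattice
vector, and adding a constant vector (the identification `ℤⁿ → P`). -/
def extAffineWeylRel (n l : ℕ) (x y : Fin n → ℤ) : Prop :=
  ∃ (σ : Equiv.Perm (Fin n)) (p : Fin n → ℤ) (c : ℤ),
    ∀ i : Fin n, y i = x (σ i) + (l : ℤ) * p i + c

section Aux

variable {α : Type*}

/-- Two tuples whose value lists are permutations of each other differ by a
permutation of the indices. -/
theorem exists_perm_of_ofFn_perm : ∀ {n : ℕ} (f g : Fin n → α),
    (List.ofFn f).Perm (List.ofFn g) → ∃ σ : Equiv.Perm (Fin n), ∀ i, g i = f (σ i) := by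
  intro n
  induction n with
  | zero => exact fun f g _ => ⟨1, fun i => i.elim0⟩
  | succ n ih =>
    intro f g h
    have h0 : g 0 ∈ List.ofFn f := h.symm.subset (by
      rw [List.mem_ofFn]; exact ⟨0, rfl⟩)
    rw [List.mem_ofFn] at h0
    obtain ⟨j, hj⟩ := h0
    set τ := Equiv.swap (0 : Fin (n+1)) j with hτ
    have hhead : (f ∘ τ) 0 = g 0 := by
      simp only [Function.comp_apply, hτ, Equiv.swap_apply_left, hj]
    have hperm : (List.ofFn (f ∘ τ)).Perm (List.ofFn g) := (τ.ofFn_comp_perm f).trans h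
    rw [List.ofFn_succ, List.ofFn_succ, hhead] at hperm
    have htail := hperm.cons_inv
    obtain ⟨ρ, hρ⟩ := ih _ _ htail
    refine ⟨(Equiv.Perm.decomposeFin.symm (0, ρ)).trans τ, fun i => ?_⟩
    induction i using Fin.cases with
    | zero =>
      simpa [Equiv.Perm.decomposeFin_symm_apply_zero] using hhead.symm
    | succ i =>
      simpa [Equiv.Perm.decomposeFin_symm_apply_succ] using hρ i

/-- The symmetric-power element associated to a tuple. -/
def symOf {n : ℕ} (f : Fin n → α) : Sym α n :=
  ⟨Multiset.map f Finset.univ.val, by simp⟩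

theorem symOf_val {n : ℕ} (f : Fin n → α) :
    (symOf f).1 = Multiset.map f Finset.univ.val := rfl

theorem exists_symOf_eq {n : ℕ} (m : Sym α n) : ∃ f : Fin n → α, symOf f = m := by
  obtain ⟨s, hs⟩ := m
  obtain ⟨L, rfl⟩ := s.exists_rep
  simp only [Multiset.quot_mk_to_coe, Multiset.coe_card] at hs
  subst hs
  refine ⟨L.get, Subtype.ext ?_⟩
  show Multiset.map L.get Finset.univ.val = ⟦L⟧
  rw [Fin.univ_val_map, List.ofFn_get]
  rfl

/-- The translation relation on `Sym (ZMod l) n`. -/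
def symTransRel (l n : ℕ) (m m' : Sym (ZMod l) n) : Prop :=
  ∃ c : ZMod l, m' = m.map (· + c)

theorem sym_map_add_add {l n : ℕ} (m : Sym (ZMod l) n) (c d : ZMod l) :
    (m.map (· + c)).map (· + d) = m.map (· + (c + d)) := by
  rw [Sym.map_map]
  congr 1
  funext a
  simp [add_assoc]

theorem sym_map_add_zero {l n : ℕ} (m : Sym (ZMod l) n) :
    m.map (· + (0 : ZMod l)) = m := by
  refine Subtype.ext ?_
  simp [Sym.map]

theorem symTransRel_equiv (l n : ℕ) : Equivalence (symTransRel l n) := by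
  constructor
  · exact fun m => ⟨0, (sym_map_add_zero m).symm⟩
  · rintro m m' ⟨c, rfl⟩
    exact ⟨-c, by rw [sym_map_add_add, add_neg_cancel, sym_map_add_zero]⟩
  · rintro m m' m'' ⟨c, rfl⟩ ⟨d, rfl⟩
    exact ⟨c + d, by rw [sym_map_add_add]⟩

theorem symTransRel_free {l n : ℕ} [NeZero l] (hcop : Nat.Coprime l n)
    (m : Sym (ZMod l) n) (c : ZMod l) (h : m.map (· + c) = m) : c = 0 := by
  have hsum : (Multiset.map (fun a => a + c) (m : Multiset (ZMod l))).sum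
      = (m : Multiset (ZMod l)).sum := by
    have := congrArg (fun s : Sym (ZMod l) n => (s : Multiset (ZMod l)).sum) h
    simpa [Sym.map] using this
  have hexp : (Multiset.map (fun a => a + c) (m : Multiset (ZMod l))).sum
      = (m : Multiset (ZMod l)).sum + (n : ZMod l) * c := by
    rw [Multiset.sum_map_add]
    simp [m.2, nsmul_eq_mul]
  have hz : (n : ZMod l) * c = 0 := by
    have := hexp.symm.trans hsum
    exact (add_eq_left.mp this)
  have hu : IsUnit ((n : ℕ) : ZMod l) := (ZMod.isUnit_iff_coprime n l).mpr hcop.symm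
  exact (hu.mul_right_eq_zero).mp hz

theorem card_sym_eq_card_quot_mul (l n : ℕ) [NeZero l] (hcop : Nat.Coprime l n) :
    Nat.card (Sym (ZMod l) n) = Nat.card (Quot (symTransRel l n)) * l := by
  have hbij : Function.Bijective
      (fun p : Quot (symTransRel l n) × ZMod l => (p.1.out).map (· + p.2)) := by
    constructor
    · rintro ⟨q, c⟩ ⟨q', c'⟩ hpq
      simp only at hpq
      have h2 : Sym.map (· + (c + -c')) q.out = q'.out := by
        have h3 := congrArg (fun m => Sym.map (· + (-c')) m) hpq
        rw [sym_map_add_add, sym_map_add_add, add_neg_cancel, sym_map_add_zero] at h3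
        exact h3
      have hq : q = q' := by
        rw [← q.out_eq, ← q'.out_eq]
        exact Quot.sound ⟨c + -c', h2.symm⟩
      subst hq
      have hc : c = c' := by
        have h0 := symTransRel_free hcop q.out (c + -c') h2
        have : c + -c' = 0 := h0
        linear_combination this
      rw [hc]
    · intro m
      have hout : Quot.mk _ (Quot.mk (symTransRel l n) m).out = Quot.mk (symTransRel l n) m :=
        Quot.out_eq _
      have hT : symTransRel l n (Quot.mk (symTransRel l n) m).out m :=
        ((symTransRel_equiv l n).eqvGen_iff).mp (Quot.eq.mp hout)
      obtain ⟨c, hc⟩ := hT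
      exact ⟨⟨Quot.mk _ m, c⟩, hc.symm⟩
  rw [← Nat.card_eq_of_bijective _ hbij, Nat.card_prod, Nat.card_zmod]

end Aux

/-- for `l` coprime to `n` and `l ≥ n + 1`, the number of orbits of the
extended affine Weyl group `W ⋉ lP` on the weight lattice `P` of `sl_n` equals the
rational Catalan number `(1/(l+n))·C(l+n, n)`. -/
theorem stmt_12 (n l : ℕ) (hcop : Nat.Coprime l n) (hl : n + 1 ≤ l) :
    Nat.card (Quot (extAffineWeylRel n l)) * (l + n) = (l + n).choose n := by
  haveI : NeZero l := ⟨by omega⟩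
  -- the reduction map
  set red : (Fin n → ℤ) → (Fin n → ZMod l) := fun x i => ((x i : ℤ) : ZMod l) with hred
  have key : ∀ x y : Fin n → ℤ, extAffineWeylRel n l x y →
      symTransRel l n (symOf (red x)) (symOf (red y)) := by
    rintro x y ⟨σ, p, c, hxy⟩
    refine ⟨((c : ℤ) : ZMod l), ?_⟩
    refine Subtype.ext ?_
    have hcoord : red y = ((fun a => a + ((c : ℤ) : ZMod l)) ∘ red x) ∘ σ := by
      funext i
      simp only [hred, Function.comp_apply, hxy i]
      push_cast
      rw [ZMod.natCast_self]
      ring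
    show Multiset.map (red y) Finset.univ.val
        = Multiset.map (fun a => a + ((c : ℤ) : ZMod l)) (Multiset.map (red x) Finset.univ.val)
    rw [Multiset.map_map, hcoord, Fin.univ_val_map, Fin.univ_val_map]
    exact Multiset.coe_eq_coe.mpr (σ.ofFn_comp_perm _)
  have keyrev : ∀ x y : Fin n → ℤ,
      symTransRel l n (symOf (red x)) (symOf (red y)) → extAffineWeylRel n l x y := by
    rintro x y ⟨c, hc⟩
    obtain ⟨c', rfl⟩ := ZMod.intCast_surjective c
    have hmul : Multiset.map (red y) Finset.univ.val
        = Multiset.map ((fun a => a + ((c' : ℤ) : ZMod l)) ∘ red x) Finset.univ.val := by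
      have h0 : (symOf (red y)).1 = (Sym.map (fun a => a + ((c' : ℤ) : ZMod l)) (symOf (red x))).1 :=
        congrArg Subtype.val hc
      rw [symOf_val] at h0
      rw [h0]
      show Multiset.map _ (Multiset.map (red x) Finset.univ.val) = _
      rw [Multiset.map_map]
    rw [Fin.univ_val_map, Fin.univ_val_map] at hmul
    have hperm := Multiset.coe_eq_coe.mp hmul
    obtain ⟨σ, hσ⟩ := exists_perm_of_ofFn_perm _ _ hperm.symm
    refine ⟨σ, fun i => (y i - x (σ i) - c') / l, c', fun i => ?_⟩
    have hdvd : (l : ℤ) ∣ (y i - x (σ i) - c') := by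
      rw [← ZMod.intCast_zmod_eq_zero_iff_dvd]
      push_cast
      have := hσ i
      simp only [hred] at this
      rw [this]
      simp only [Function.comp_apply]
      ring
    rw [Int.mul_ediv_cancel' hdvd]
    ring
  -- the bijection between quotients
  have hbij : Function.Bijective
      (Quot.lift (fun x => Quot.mk (symTransRel l n) (symOf (red x)))
        (fun x y h => Quot.sound (key x y h)) :
        Quot (extAffineWeylRel n l) → Quot (symTransRel l n)) := by
    constructor
    · intro q q'
      induction q using Quot.ind with | _ x =>
      induction q' using Quot.ind with | _ y =>
      intro h
      simp only [Quot.lift_mk] at h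
      exact Quot.sound (keyrev x y
        (((symTransRel_equiv l n).eqvGen_iff).mp (Quot.eq.mp h)))
    · intro q
      induction q using Quot.ind with | _ m =>
      obtain ⟨f, hf⟩ := exists_symOf_eq m
      refine ⟨Quot.mk _ (fun i => ((f i).val : ℤ)), ?_⟩
      simp only [Quot.lift_mk]
      congr 1
      rw [← hf]
      congr 1
      funext i
      simp [hred, ZMod.natCast_val, ZMod.cast_id]
  have hcards : Nat.card (Quot (extAffineWeylRel n l)) = Nat.card (Quot (symTransRel l n)) :=
    Nat.card_eq_of_bijective _ hbij
  have hsym : Nat.card (Sym (ZMod l) n) = (l + n - 1).choose n := by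
    rw [Nat.card_eq_fintype_card, Sym.card_sym_eq_choose, ZMod.card]
  have hmain : Nat.card (Quot (extAffineWeylRel n l)) * l = (l + n - 1).choose n := by
    rw [hcards, ← card_sym_eq_card_quot_mul l n hcop, hsym]
  -- arithmetic
  set N := Nat.card (Quot (extAffineWeylRel n l))
  obtain ⟨m, rfl⟩ : ∃ m, l = m + 1 := ⟨l - 1, by omega⟩
  have h1 : N * (m + 1) = (m + n).choose n := by
    have : m + 1 + n - 1 = m + n := by omega
    rwa [this] at hmain
  have h2 : (m + n).choose n = (m + n).choose m := by
    rw [Nat.add_comm m n, Nat.choose_symm_add]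
  have h3 : (m + n + 1) * (m + n).choose m = (m + n + 1).choose (m + 1) * (m + 1) :=
    Nat.add_one_mul_choose_eq (m + n) m
  have h4 : (m + n + 1).choose (m + 1) = (m + n + 1).choose n := by
    rw [show m + n + 1 = (m + 1) + n by omega, Nat.choose_symm_add]
  have h5 : N * (m + 1 + n) * (m + 1) = (m + 1 + n).choose n * (m + 1) := by
    calc N * (m + 1 + n) * (m + 1) = (N * (m + 1)) * (m + 1 + n) := by ring
    _ = (m + n).choose m * (m + n + 1) := by rw [h1, h2]; ring_nf
    _ = (m + n + 1).choose (m + 1) * (m + 1) := by rw [← h3]; ring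
    _ = (m + 1 + n).choose n * (m + 1) := by rw [h4, show m + n + 1 = m + 1 + n by omega]
  exact Nat.eq_of_mul_eq_mul_right (by omega) h5
end

section
/- Let E be the path algebra over C of the quiver with two vertices and arrows a₁, a₂ from vertex 1 to vertex 2 and b₁, b₂ from vertex 2 to vertex 1, modulo the relations a_i b_j = 0 = b_j a_i for i ≠ j, a₁b₁ = a₂b₂, and b₁a₁ = b₂a₂. Then E is a finite-dimensional algebra whose Cartan matrix is [[2,2],[2,2]], which has rank one; consequently dim_C Z(E) combined with the rank-one Cartan matrix gives dim of the projective (Higman) center of E equal to 1. -/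
open scoped Matrix

/-- Generators of the path algebra: `0 ↦ e₁, 1 ↦ e₂` (vertex idempotents),
`2 ↦ a₁, 3 ↦ a₂` (arrows `1 → 2`), `4 ↦ b₁, 5 ↦ b₂` (arrows `2 → 1`). -/
noncomputable def gen (i : Fin 6) : FreeAlgebra ℂ (Fin 6) := FreeAlgebra.ι ℂ i

/-- The relations of the quiver algebra: path-algebra relations for the quiver with two
vertices, arrows `a₁, a₂ : 1 → 2` and `b₁, b₂ : 2 → 1`, together with the admissible
relations `aᵢ bⱼ = 0 = bⱼ aᵢ (i ≠ j)`, `a₁ b₁ = a₂ b₂`, `b₁ a₁ = b₂ a₂`. -/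
inductive quiverRel : FreeAlgebra ℂ (Fin 6) → FreeAlgebra ℂ (Fin 6) → Prop
  | unit : quiverRel (gen 0 + gen 1) 1
  | idem1 : quiverRel (gen 0 * gen 0) (gen 0)
  | idem2 : quiverRel (gen 1 * gen 1) (gen 1)
  | orth1 : quiverRel (gen 0 * gen 1) 0
  | orth2 : quiverRel (gen 1 * gen 0) 0
  | pathA1l : quiverRel (gen 1 * gen 2) (gen 2)
  | pathA1r : quiverRel (gen 2 * gen 0) (gen 2)
  | pathA2l : quiverRel (gen 1 * gen 3) (gen 3)
  | pathA2r : quiverRel (gen 3 * gen 0) (gen 3)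
  | pathB1l : quiverRel (gen 0 * gen 4) (gen 4)
  | pathB1r : quiverRel (gen 4 * gen 1) (gen 4)
  | pathB2l : quiverRel (gen 0 * gen 5) (gen 5)
  | pathB2r : quiverRel (gen 5 * gen 1) (gen 5)
  | ab12 : quiverRel (gen 2 * gen 5) 0
  | ab21 : quiverRel (gen 3 * gen 4) 0
  | ba12 : quiverRel (gen 4 * gen 3) 0
  | ba21 : quiverRel (gen 5 * gen 2) 0
  | abEq : quiverRel (gen 2 * gen 4) (gen 3 * gen 5)
  | baEq : quiverRel (gen 4 * gen 2) (gen 5 * gen 3)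

/-- The quiver algebra `E`, Morita equivalent to a regular block of `u_q(sl₂)`. -/
noncomputable def quiverAlgE : Type := RingQuot quiverRel

noncomputable instance : Ring quiverAlgE := inferInstanceAs (Ring (RingQuot quiverRel))
noncomputable instance : Algebra ℂ quiverAlgE := inferInstanceAs (Algebra ℂ (RingQuot quiverRel))

/-!
Every product of generators of `E` reduces to `0` or to one of the eight paths
`e₁, e₂, a₁, a₂, b₁, b₂, b₁a₁, a₁b₁` (paths of length three vanish), so these span `E`, and
`e_j E e_i` is spanned by the two paths from `i` to `j`. These two paths act linearly
independently on the four-dimensional projective `E eᵢ`, which is written down explicitly by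
`4 × 4` matrices. Hence every Cartan entry is `2`, and a constant nonzero matrix has rank one.
-/

theorem LinearMap.range_eq_span_of_span_eq_top {R M N : Type*} [Semiring R] [AddCommMonoid M]
    [Module R M] [AddCommMonoid N] [Module R N] (f : M →ₗ[R] N) {s : Set M}
    (hs : Submodule.span R s = ⊤) {t : Set N} (hst : ∀ x ∈ s, f x ∈ Submodule.span R t)
    (ht : t ⊆ LinearMap.range f) : LinearMap.range f = Submodule.span R t := by
  refine le_antisymm ?_ (Submodule.span_le.2 ht)
  rw [LinearMap.range_eq_map, ← hs, Submodule.map_span_le]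
  exact hst

theorem LinearIndependent.pair_of_apply {K V : Type*} [DivisionRing K] [AddCommGroup V]
    [Module K V] {x y : V} (f g : V →ₗ[K] K) (hfx : f x ≠ 0) (hgx : g x = 0) (hgy : g y ≠ 0) :
    LinearIndependent K ![x, y] :=
  (LinearIndependent.pair_iff' fun hx => hfx (by rw [hx, map_zero])).2 fun c hc =>
    hgy (by rw [← hc, map_smul, hgx, smul_zero])

theorem Matrix.rank_of_const {m n K : Type*} [Fintype n] [Nonempty m]
    [Nonempty n] [Field K] {c : K} (hc : c ≠ 0) :
    (Matrix.of fun (_ : m) (_ : n) => c).rank = 1 := by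
  have hcol : (Matrix.of fun (_ : m) (_ : n) => c).col = fun _ _ => c := rfl
  rw [Matrix.rank_eq_finrank_span_cols, hcol, Set.range_const,
    finrank_span_singleton (Function.ne_iff.2 ⟨Classical.arbitrary m, hc⟩)]

namespace quiverAlgE

local notation "E" => RingQuot quiverRel

open Matrix Submodule

noncomputable section

-- Vertices and arrows are indexed from `0`: `e 0 = e₁`, `a 0 = a₁`, `b 1 = b₂`, ...
def e (i : Fin 2) : E := RingQuot.mkAlgHom ℂ quiverRel (gen ⟨i, by omega⟩)
def a (k : Fin 2) : E := RingQuot.mkAlgHom ℂ quiverRel (gen ⟨k + 2, by omega⟩)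
def b (k : Fin 2) : E := RingQuot.mkAlgHom ℂ quiverRel (gen ⟨k + 4, by omega⟩)
def c₁ : E := b 0 * a 0
def c₂ : E := a 0 * b 0

lemma mk_gen_mul_gen {g h : Fin 6} {z : FreeAlgebra ℂ (Fin 6)}
    (hz : quiverRel (gen g * gen h) z) :
    RingQuot.mkAlgHom ℂ quiverRel (gen g) * RingQuot.mkAlgHom ℂ quiverRel (gen h) =
      RingQuot.mkAlgHom ℂ quiverRel z := by
  rw [← map_mul]; exact RingQuot.mkAlgHom_rel ℂ hz

lemma e_add_e : e 0 + e 1 = 1 := by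
  rw [← map_one (RingQuot.mkAlgHom ℂ quiverRel), ← RingQuot.mkAlgHom_rel ℂ quiverRel.unit,
    map_add]
  rfl

@[simp]
lemma e_mul_e (i j : Fin 2) : e i * e j = if i = j then e i else 0 := by
  fin_cases i <;> fin_cases j
  · exact mk_gen_mul_gen .idem1
  · exact (mk_gen_mul_gen .orth1).trans (map_zero _)
  · exact (mk_gen_mul_gen .orth2).trans (map_zero _)
  · exact mk_gen_mul_gen .idem2

lemma e_one_mul_a (k : Fin 2) : e 1 * a k = a k := by
  fin_cases k
  exacts [mk_gen_mul_gen .pathA1l, mk_gen_mul_gen .pathA2l]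

lemma a_mul_e_zero (k : Fin 2) : a k * e 0 = a k := by
  fin_cases k
  exacts [mk_gen_mul_gen .pathA1r, mk_gen_mul_gen .pathA2r]

lemma e_zero_mul_b (k : Fin 2) : e 0 * b k = b k := by
  fin_cases k
  exacts [mk_gen_mul_gen .pathB1l, mk_gen_mul_gen .pathB2l]

lemma b_mul_e_one (k : Fin 2) : b k * e 1 = b k := by
  fin_cases k
  exacts [mk_gen_mul_gen .pathB1r, mk_gen_mul_gen .pathB2r]

@[simp]
lemma e_mul_a (i k : Fin 2) : e i * a k = if i = 1 then a k else 0 := by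
  rw [← e_one_mul_a k, ← mul_assoc, e_mul_e]
  split_ifs <;> simp_all

@[simp]
lemma a_mul_e (k i : Fin 2) : a k * e i = if i = 0 then a k else 0 := by
  rw [← a_mul_e_zero k, mul_assoc, e_mul_e]
  split_ifs <;> simp_all

@[simp]
lemma e_mul_b (i k : Fin 2) : e i * b k = if i = 0 then b k else 0 := by
  rw [← e_zero_mul_b k, ← mul_assoc, e_mul_e]
  split_ifs <;> simp_all

@[simp]
lemma b_mul_e (k i : Fin 2) : b k * e i = if i = 1 then b k else 0 := by
  rw [← b_mul_e_one k, mul_assoc, e_mul_e]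
  split_ifs <;> simp_all

@[simp]
lemma a_mul_a (k l : Fin 2) : a k * a l = 0 := by
  rw [← a_mul_e_zero k, mul_assoc, e_mul_a]; simp

@[simp]
lemma b_mul_b (k l : Fin 2) : b k * b l = 0 := by
  rw [← b_mul_e_one k, mul_assoc, e_mul_b]; simp

@[simp]
lemma a_mul_b (k l : Fin 2) : a k * b l = if k = l then c₂ else 0 := by
  fin_cases k <;> fin_cases l
  · rfl
  · exact (mk_gen_mul_gen .ab12).trans (map_zero _)
  · exact (mk_gen_mul_gen .ab21).trans (map_zero _)
  · exact ((mk_gen_mul_gen .abEq).trans (map_mul _ _ _)).symm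

@[simp]
lemma b_mul_a (k l : Fin 2) : b k * a l = if k = l then c₁ else 0 := by
  fin_cases k <;> fin_cases l
  · rfl
  · exact (mk_gen_mul_gen .ba12).trans (map_zero _)
  · exact (mk_gen_mul_gen .ba21).trans (map_zero _)
  · exact ((mk_gen_mul_gen .baEq).trans (map_mul _ _ _)).symm

@[simp]
lemma c₂_mul_a (k : Fin 2) : c₂ * a k = 0 := by
  have hc₁ : c₁ = b 1 * a 1 := by simp
  rw [c₂, mul_assoc, b_mul_a]
  -- `a₁ b₁ a₁ = a₁ b₂ a₂ = 0`
  split_ifs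
  · rw [hc₁, ← mul_assoc, a_mul_b]; simp
  · simp

@[simp]
lemma c₁_mul_b (k : Fin 2) : c₁ * b k = 0 := by
  have hc₂ : c₂ = a 1 * b 1 := by simp
  rw [c₁, mul_assoc, a_mul_b]
  -- `b₁ a₁ b₁ = b₁ a₂ b₂ = 0`
  split_ifs
  · rw [hc₂, ← mul_assoc, b_mul_a]; simp
  · simp

@[simp]
lemma e_mul_c₁ (i : Fin 2) : e i * c₁ = if i = 0 then c₁ else 0 := by
  rw [c₁, ← mul_assoc, e_mul_b]; split_ifs <;> simp

@[simp]
lemma c₁_mul_e (i : Fin 2) : c₁ * e i = if i = 0 then c₁ else 0 := by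
  rw [c₁, mul_assoc, a_mul_e]; split_ifs <;> simp

@[simp]
lemma e_mul_c₂ (i : Fin 2) : e i * c₂ = if i = 1 then c₂ else 0 := by
  rw [c₂, ← mul_assoc, e_mul_a]; split_ifs <;> simp

@[simp]
lemma c₂_mul_e (i : Fin 2) : c₂ * e i = if i = 1 then c₂ else 0 := by
  rw [c₂, mul_assoc, b_mul_e]; split_ifs <;> simp

@[simp]
lemma a_mul_c₁ (k : Fin 2) : a k * c₁ = 0 := by
  rw [c₁, ← mul_assoc, a_mul_b]; split_ifs <;> simp

@[simp]
lemma b_mul_c₁ (k : Fin 2) : b k * c₁ = 0 := by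
  rw [c₁, ← mul_assoc, b_mul_b, zero_mul]

@[simp]
lemma a_mul_c₂ (k : Fin 2) : a k * c₂ = 0 := by
  rw [c₂, ← mul_assoc, a_mul_a, zero_mul]

@[simp]
lemma b_mul_c₂ (k : Fin 2) : b k * c₂ = 0 := by
  rw [c₂, ← mul_assoc, b_mul_a]; split_ifs <;> simp

def paths : Set E := {e 0, e 1, a 0, a 1, b 0, b 1, c₁, c₂}

lemma mk_gen (g : Fin 6) :
    RingQuot.mkAlgHom ℂ quiverRel (gen g) = ![e 0, e 1, a 0, a 1, b 0, b 1] g := by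
  fin_cases g <;> rfl

lemma mk_gen_mul_mem_span_paths (g : Fin 6) {t : E} (ht : t ∈ paths) :
    RingQuot.mkAlgHom ℂ quiverRel (gen g) * t ∈ span ℂ paths := by
  rw [mk_gen]
  fin_cases g <;> rcases ht with rfl | rfl | rfl | rfl | rfl | rfl | rfl | rfl <;>
    simp <;>
    exact subset_span (by simp [paths])

lemma mul_mem_span_paths (z : E) {t : E} (ht : t ∈ span ℂ paths) : z * t ∈ span ℂ paths := by
  obtain ⟨w, rfl⟩ := RingQuot.mkAlgHom_surjective ℂ quiverRel z
  induction w using FreeAlgebra.induction generalizing t with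
  | grade0 r => simpa [Algebra.smul_def] using smul_mem _ r ht
  | grade1 g =>
    have : span ℂ paths ≤ (span ℂ paths).comap (LinearMap.mulLeft ℂ _) :=
      span_le.2 fun s hs => mk_gen_mul_mem_span_paths g hs
    exact this ht
  | mul w₁ w₂ h₁ h₂ => rw [map_mul, mul_assoc]; exact h₁ (h₂ ht)
  | add w₁ w₂ h₁ h₂ => rw [map_add, add_mul]; exact add_mem (h₁ ht) (h₂ ht)

lemma span_paths : span ℂ paths = ⊤ := by
  have h₁ : (1 : E) ∈ span ℂ paths := by
    rw [← e_add_e]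
    exact add_mem (subset_span (by simp [paths])) (subset_span (by simp [paths]))
  exact eq_top_iff.2 fun z _ => by simpa using mul_mem_span_paths z h₁

instance : FiniteDimensional ℂ E :=
  Module.finite_def.2 (span_paths ▸ fg_span (by simp [paths]))

/-- The generators acting on the projective `E eᵢ`, in its basis `eᵢ`, the two arrows starting
at `i`, and the path of length two from `i` to `i`. -/
def pimGen : Fin 2 → Fin 6 → Matrix (Fin 4) (Fin 4) ℂ
  | 0 => ![single 0 0 1 + single 3 3 1, single 1 1 1 + single 2 2 1,
      single 1 0 1, single 2 0 1, single 3 1 1, single 3 2 1]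
  | 1 => ![single 1 1 1 + single 2 2 1, single 0 0 1 + single 3 3 1,
      single 3 1 1, single 3 2 1, single 1 0 1, single 2 0 1]

lemma pimGen_rel (i : Fin 2) ⦃x y : FreeAlgebra ℂ (Fin 6)⦄ (h : quiverRel x y) :
    FreeAlgebra.lift ℂ (pimGen i) x = FreeAlgebra.lift ℂ (pimGen i) y := by
  fin_cases i <;> cases h <;> simp [gen, pimGen, add_mul, mul_add] <;>
    (ext p q; fin_cases p <;> fin_cases q <;> simp [one_apply])

def pimRep (i : Fin 2) : E →ₐ[ℂ] Matrix (Fin 4) (Fin 4) ℂ :=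
  RingQuot.liftAlgHom ℂ ⟨FreeAlgebra.lift ℂ (pimGen i), pimGen_rel i⟩

lemma pimRep_mk_gen (i : Fin 2) (g : Fin 6) :
    pimRep i (RingQuot.mkAlgHom ℂ quiverRel (gen g)) = pimGen i g := by
  simp [pimRep, gen]

def pimEntry (i : Fin 2) (p q : Fin 4) : E →ₗ[ℂ] ℂ :=
  entryLinearMap ℂ ℂ p q ∘ₗ (pimRep i).toLinearMap

def cornerBasis : Fin 2 → Fin 2 → Fin 2 → E
  | 0, 0 => ![e 0, c₁]
  | 1, 0 => ![a 0, a 1]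
  | 0, 1 => ![b 0, b 1]
  | 1, 1 => ![e 1, c₂]

lemma linearIndependent_cornerBasis (j i : Fin 2) : LinearIndependent ℂ (cornerBasis j i) := by
  fin_cases j <;> fin_cases i <;>
    [refine .pair_of_apply (pimEntry 0 0 0) (pimEntry 0 3 0) ?_ ?_ ?_;
     refine .pair_of_apply (pimEntry 1 1 0) (pimEntry 1 2 0) ?_ ?_ ?_;
     refine .pair_of_apply (pimEntry 0 1 0) (pimEntry 0 2 0) ?_ ?_ ?_;
     refine .pair_of_apply (pimEntry 1 0 0) (pimEntry 1 3 0) ?_ ?_ ?_] <;>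
    simp [pimEntry, e, a, b, c₁, c₂, pimRep_mk_gen, pimGen]

lemma range_corner (j i : Fin 2) :
    LinearMap.range (LinearMap.mulLeft ℂ (e j) ∘ₗ LinearMap.mulRight ℂ (e i)) =
      span ℂ (Set.range (cornerBasis j i)) := by
  refine LinearMap.range_eq_span_of_span_eq_top _ span_paths ?_ ?_
  · rintro t (rfl | rfl | rfl | rfl | rfl | rfl | rfl | rfl) <;>
    fin_cases j <;> fin_cases i <;>
    simp <;>
    exact subset_span (by simp [cornerBasis])
  · rintro _ ⟨m, rfl⟩
    refine ⟨cornerBasis j i m, ?_⟩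
    fin_cases j <;> fin_cases i <;> fin_cases m <;>
      simp [cornerBasis]

lemma finrank_corner (j i : Fin 2) :
    Module.finrank ℂ
      (LinearMap.range (LinearMap.mulLeft ℂ (e j) ∘ₗ LinearMap.mulRight ℂ (e i))) = 2 := by
  rw [range_corner, finrank_span_eq_card (linearIndependent_cornerBasis j i), Fintype.card_fin]

end

end quiverAlgE

/-- the quiver algebra `E` (two vertices, arrows `a₁ a₂ : 1 → 2`,
`b₁ b₂ : 2 → 1`, relations `aᵢbⱼ = 0 = bⱼaᵢ` for `i ≠ j`, `a₁b₁ = a₂b₂`, `b₁a₁ = b₂a₂`)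
is a finite-dimensional `ℂ`-algebra whose Cartan matrix `[[2,2],[2,2]]` has rank one;
consequently the projective (Higman) center of `E` has dimension `1 = rank` of the
Cartan matrix. -/
theorem stmt_14 :
    FiniteDimensional ℂ quiverAlgE ∧
    -- the Cartan matrix of `E`: its `(i,j)` entry `[Pᵢ : Lⱼ] = dim_ℂ eⱼ E eᵢ` equals 2
    (∀ i j : Fin 2,
      Module.finrank ℂ
        (LinearMap.range
          ((LinearMap.mulLeft ℂ
              ((RingQuot.mkAlgHom ℂ quiverRel) (gen (j.castLE (by omega))))) ∘ₗ
            (LinearMap.mulRight ℂ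
              ((RingQuot.mkAlgHom ℂ quiverRel) (gen (i.castLE (by omega))))))) = 2) ∧
    Matrix.rank (!![(2 : ℂ), 2; 2, 2]) = 1 := by
  refine ⟨inferInstanceAs (FiniteDimensional ℂ (RingQuot quiverRel)),
    fun i j => quiverAlgE.finrank_corner j i, ?_⟩
  have hconst : !![(2 : ℂ), 2; 2, 2] = Matrix.of fun (_ : Fin 2) (_ : Fin 2) => 2 := by
    ext i j; fin_cases i <;> fin_cases j <;> rfl
  rw [hconst, Matrix.rank_of_const two_ne_zero]
end
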